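/- arXiv:1904.11724 — 3 statements merged into one kernel-verified Lean document; each statement's English description precedes it below -/
import Mathlib

section
/- For 0 < q < 1, p > -1, and α real, the quantity [p+1]^{(α)} defined by the infinite product ∏_{k=1}^∞ [p+1]_{q^k} / [p+1]_{q^{k+α}} equals Γ_{q^{p+1}}(α+1) / Γ_q(α+1) · ([p+1]_q)^α, where Γ_q is the q-Gamma function and [p+1]_{q^k} = (1 - q^{k(p+1)})/(1 - q^k). -/
open scoped BigOperators

/-- Jackson q-integral ∫₀^b f d_q = (1-q) b ∑ q^i f(q^i b). -/
noncomputable def jackson (q b : ℝ) (f : ℝ → ℝ) : ℝ :=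
  (1 - q) * b * ∑' i : ℕ, q ^ i * f (q ^ i * b)

/-- Jackson q-integral ∫_a^b. -/
noncomputable def jacksonI (q a b : ℝ) (f : ℝ → ℝ) : ℝ :=
  jackson q b f - jackson q a f

/-- q-number [a]_q = (1-q^a)/(1-q). -/
noncomputable def qNum (q a : ℝ) : ℝ := (1 - q ^ a) / (1 - q)

/-- infinite q-Pochhammer (a;q)_∞. -/
noncomputable def qPochInf (a q : ℝ) : ℝ := ∏' j : ℕ, (1 - a * q ^ j)

/-- q-Gamma function Γ_q(t) = ((q;q)_∞/(q^t;q)_∞)(1-q)^{1-t}. -/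
noncomputable def qGamma (q t : ℝ) : ℝ :=
  (qPochInf q q / qPochInf (q ^ t) q) * (1 - q) ^ (1 - t)

/-- q-exponential E_q(z) = ∏ (1 + (1-q) q^k z). -/
noncomputable def qExpE (q z : ℝ) : ℝ := ∏' k : ℕ, (1 + (1 - q) * q ^ k * z)

/-- generalized Q-power (x - y)^{(γ)}_Q = x^γ (y/x;Q)_∞ / (Q^γ y/x;Q)_∞. -/
noncomputable def genPow (Q x y γ : ℝ) : ℝ :=
  x ^ γ * (qPochInf (y / x) Q / qPochInf (Q ^ γ * (y / x)) Q)

/-- q-derivative D_q h(x) = (h(x)-h(qx))/((1-q)x). -/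
noncomputable def qDeriv (q : ℝ) (h : ℝ → ℝ) (x : ℝ) : ℝ :=
  (h x - h (q * x)) / ((1 - q) * x)

section Aux
open Real Filter Finset Topology

lemma myNegLog {x : ℝ} (h0 : 0 ≤ x) (h2 : x ≤ 1/2) : -Real.log (1 - x) ≤ 2 * x := by
  have hx1 : (0:ℝ) < 1 - x := by linarith
  have key : 1 ≤ (1 - x) * Real.exp (2*x) := by
    nlinarith [Real.add_one_le_exp (2*x), Real.exp_pos (2*x)]
  have h1 : Real.exp (-(2*x)) ≤ 1 - x := by
    rw [Real.exp_neg, inv_eq_one_div, div_le_iff₀ (Real.exp_pos _)]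
    linarith
  have := (Real.le_log_iff_exp_le hx1).2 h1
  linarith

lemma myTprodZero {f : ℕ → ℝ} (hf : Multipliable f) (n : ℕ) (hn : f n = 0) :
    ∏' i, f i = 0 := by
  have h0 : HasProd f 0 := by
    show Tendsto (fun s : Finset ℕ => ∏ i ∈ s, f i) atTop (𝓝 0)
    apply Tendsto.congr' _ tendsto_const_nhds
    filter_upwards [Filter.eventually_ge_atTop ({n} : Finset ℕ)] with s hs
    exact (Finset.prod_eq_zero (hs (Finset.mem_singleton_self n)) hn).symm
  exact hf.hasProd.unique h0

lemma myGeom (c r : ℝ) (hr0 : 0 < r) (hr1 : r < 1) (hc : 0 < c) :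
    Multipliable (fun j : ℕ => 1 - c * r ^ j) ∧
      ((∀ j : ℕ, 1 - c * r ^ j ≠ 0) → (∏' j : ℕ, (1 - c * r ^ j)) ≠ 0) := by
  obtain ⟨N, hN⟩ : ∃ N : ℕ, r ^ N < 1/(2*c) :=
    exists_pow_lt_of_lt_one (by positivity) hr1
  have hxb : ∀ j : ℕ, c * r ^ (j + N) ≤ 1/2 := by
    intro j
    have h1 : r ^ (j + N) ≤ r ^ N := by
      rw [pow_add]
      calc r ^ j * r ^ N ≤ 1 * r ^ N := by
            apply mul_le_mul_of_nonneg_right (pow_le_one₀ hr0.le hr1.le) (by positivity)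
        _ = r ^ N := one_mul _
    have hcc : c * (1/(2*c)) = 1/2 := by field_simp
    nlinarith [pow_pos hr0 (j+N), mul_lt_mul_of_pos_left hN hc]
  have hxpos : ∀ j : ℕ, 0 < c * r ^ (j + N) := fun j => by positivity
  have hpos : ∀ j : ℕ, 0 < 1 - c * r ^ (j + N) := fun j => by
    have := hxb j; linarith
  have hsumneg : Summable (fun j : ℕ => -Real.log (1 - c * r ^ (j + N))) := by
    apply Summable.of_nonneg_of_le (f := fun j : ℕ => (2 * (c * r ^ N)) * r ^ j)
      ?_ ?_ ((summable_geometric_of_lt_one hr0.le hr1).mul_left _)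
    · intro j
      have h1 : 1 - c * r ^ (j+N) ≤ 1 := by nlinarith [hxpos j]
      have := Real.log_nonpos (by linarith [hpos j]) h1
      linarith
    · intro j
      have := myNegLog (hxpos j).le (hxb j)
      calc -Real.log (1 - c * r ^ (j + N)) ≤ 2 * (c * r ^ (j+N)) := this
        _ = (2 * (c * r ^ N)) * r ^ j := by rw [pow_add]; ring
  have hslog : Summable (fun j : ℕ => Real.log (1 - c * r ^ (j + N))) := by
    simpa using hsumneg.neg
  have hProdTail : HasProd (fun j : ℕ => 1 - c * r ^ (j + N))
      (Real.exp (∑' j : ℕ, Real.log (1 - c * r ^ (j + N)))) := by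
    have h2 := hslog.hasSum.rexp
    have h3 : (rexp ∘ fun j : ℕ => Real.log (1 - c * r ^ (j + N)))
        = fun j : ℕ => 1 - c * r ^ (j + N) :=
      funext fun j => Real.exp_log (hpos j)
    rwa [h3] at h2
  have hfull := HasProd.prod_range_mul (f := fun j : ℕ => 1 - c * r ^ j) (k := N) hProdTail
  refine ⟨hfull.multipliable, fun hne => ?_⟩
  rw [hfull.tprod_eq]
  exact mul_ne_zero (Finset.prod_ne_zero_iff.2 fun i _ => hne i) (Real.exp_ne_zero _)

end Aux

open Real Filter Finset Topology in
theorem bracketPow_eq_qGamma_ratio (q p α : ℝ) (hq0 : 0 < q) (hq1 : q < 1) (hp : -1 < p)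
    (hM : Multipliable (fun k : ℕ =>
      qNum (q ^ ((k : ℝ) + 1)) (p + 1) / qNum (q ^ ((k : ℝ) + 1 + α)) (p + 1))) :
    (∏' k : ℕ, qNum (q ^ ((k : ℝ) + 1)) (p + 1) / qNum (q ^ ((k : ℝ) + 1 + α)) (p + 1))
      = qGamma (q ^ (p + 1)) (α + 1) / qGamma q (α + 1) * (qNum q (p + 1)) ^ α := by
  have hp1 : (0:ℝ) < p + 1 := by linarith
  set Q := q ^ (p + 1) with hQdef
  have hQ0 : 0 < Q := Real.rpow_pos_of_pos hq0 _
  have hQ1 : Q < 1 := Real.rpow_lt_one hq0.le hq1 (by linarith)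
  have hq1' : (0:ℝ) < 1 - q := by linarith
  have hQ1' : (0:ℝ) < 1 - Q := by linarith
  have hcomb : ∀ (x : ℝ), 0 < x → ∀ (t : ℝ) (j : ℕ), x ^ t * x ^ j = x ^ (t + (j:ℝ)) := by
    intro x hx t j
    rw [Real.rpow_add hx, Real.rpow_natCast]
  have hbase : ∀ s : ℝ, ((q:ℝ) ^ s) ^ (p+1) = Q ^ s := by
    intro s
    rw [← Real.rpow_mul hq0.le, mul_comm, Real.rpow_mul hq0.le, ← hQdef]
  have hDD : ∀ a b c d : ℝ, a/c/(b/d) = a*d/(c*b) := by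
    intro a b c d
    simp [div_eq_mul_inv, mul_inv]
    ring
  have hterm : ∀ k : ℕ,
      qNum (q ^ ((k : ℝ) + 1)) (p + 1) / qNum (q ^ ((k : ℝ) + 1 + α)) (p + 1)
      = ((1 - Q * Q ^ k) * (1 - q ^ (α+1) * q ^ k))
          / ((1 - q * q ^ k) * (1 - Q ^ (α+1) * Q ^ k)) := by
    intro k
    have e1 : (q:ℝ) ^ ((k:ℝ)+1) = q * q ^ k := by
      rw [show (k:ℝ)+1 = 1+(k:ℝ) by ring, Real.rpow_add hq0, Real.rpow_one, Real.rpow_natCast]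
    have e2 : (q:ℝ) ^ ((k:ℝ)+1+α) = q ^ (α+1) * q ^ k := by
      rw [show (k:ℝ)+1+α = (α+1)+(k:ℝ) by ring, Real.rpow_add hq0, Real.rpow_natCast]
    have e3 : Q ^ ((k:ℝ)+1) = Q * Q ^ k := by
      rw [show (k:ℝ)+1 = 1+(k:ℝ) by ring, Real.rpow_add hQ0, Real.rpow_one, Real.rpow_natCast]
    have e4 : Q ^ ((k:ℝ)+1+α) = Q ^ (α+1) * Q ^ k := by
      rw [show (k:ℝ)+1+α = (α+1)+(k:ℝ) by ring, Real.rpow_add hQ0, Real.rpow_natCast]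
    simp only [qNum]
    rw [hbase ((k:ℝ)+1), hbase ((k:ℝ)+1+α), e3, e4, e1, e2]
    exact hDD _ _ _ _
  by_cases hdeg : ∃ n : ℕ, (n:ℝ) + 1 + α = 0
  · obtain ⟨n, hn⟩ := hdeg
    have h1 : (q:ℝ) ^ ((n:ℝ)+1+α) = 1 := by rw [hn, Real.rpow_zero]
    have hL : (∏' k : ℕ, qNum (q ^ ((k : ℝ) + 1)) (p + 1) / qNum (q ^ ((k : ℝ) + 1 + α)) (p + 1))
        = 0 := by
      apply myTprodZero hM n
      simp [qNum, h1, Real.one_rpow]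
    rw [hL]
    have hBn : 1 - Q ^ (α+1) * Q ^ n = 0 := by
      rw [hcomb Q hQ0 (α+1) n, show α + 1 + (n:ℝ) = 0 by linarith, Real.rpow_zero, sub_self]
    have mB := (myGeom (Q ^ (α+1)) Q hQ0 hQ1 (Real.rpow_pos_of_pos hQ0 _)).1
    have hPB : qPochInf (Q ^ (α+1)) Q = 0 := myTprodZero mB n hBn
    simp [qGamma, hPB]
  · push_neg at hdeg
    obtain ⟨mA, nzA⟩ := myGeom Q Q hQ0 hQ1 hQ0
    obtain ⟨mB, nzB⟩ := myGeom (Q ^ (α+1)) Q hQ0 hQ1 (Real.rpow_pos_of_pos hQ0 _)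
    obtain ⟨mC, nzC⟩ := myGeom q q hq0 hq1 hq0
    obtain ⟨mD, nzD⟩ := myGeom (q ^ (α+1)) q hq0 hq1 (Real.rpow_pos_of_pos hq0 _)
    have hne : ∀ (x : ℝ), 0 < x → x < 1 → ∀ j : ℕ, 1 - x ^ (α+1) * x ^ j ≠ 0 := by
      intro x hx0 hx1 j
      rw [hcomb x hx0 (α+1) j]
      have ht : α + 1 + (j:ℝ) ≠ 0 := fun h => hdeg j (by linarith)
      rcases lt_or_gt_of_ne ht with ht' | ht'
      · have : 1 < x ^ (α + 1 + (j:ℝ)) :=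
          (Real.one_lt_rpow_iff_of_pos hx0).2 (Or.inr ⟨hx1, ht'⟩)
        exact sub_ne_zero.2 this.ne
      · have : x ^ (α + 1 + (j:ℝ)) < 1 := Real.rpow_lt_one hx0.le hx1 ht'
        exact sub_ne_zero.2 this.ne'
    have hBne := hne Q hQ0 hQ1
    have hDne := hne q hq0 hq1
    have hCne : ∀ j : ℕ, 1 - q * q ^ j ≠ 0 := by
      intro j
      have : q * q ^ j < 1 := by
        rw [← pow_succ']
        exact pow_lt_one₀ hq0.le hq1 (Nat.succ_ne_zero j)
      exact sub_ne_zero.2 this.ne'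
    have hPBne : (∏' j : ℕ, (1 - Q ^ (α+1) * Q ^ j)) ≠ 0 := nzB hBne
    have hPCne : (∏' j : ℕ, (1 - q * q ^ j)) ≠ 0 := nzC hCne
    have hPDne : (∏' j : ℕ, (1 - q ^ (α+1) * q ^ j)) ≠ 0 := nzD hDne
    have hMnew : Multipliable (fun k : ℕ =>
        ((1 - Q * Q ^ k) * (1 - q ^ (α+1) * q ^ k))
          / ((1 - q * q ^ k) * (1 - Q ^ (α+1) * Q ^ k))) := by
      refine hM.congr hterm
    have heq : ∀ n : ℕ, (∏ k ∈ Finset.range n,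
        ((1 - Q * Q ^ k) * (1 - q ^ (α+1) * q ^ k))
          / ((1 - q * q ^ k) * (1 - Q ^ (α+1) * Q ^ k)))
        = ((∏ k ∈ Finset.range n, (1 - Q * Q ^ k)) * (∏ k ∈ Finset.range n, (1 - q ^ (α+1) * q ^ k)))
          / ((∏ k ∈ Finset.range n, (1 - q * q ^ k)) * (∏ k ∈ Finset.range n, (1 - Q ^ (α+1) * Q ^ k))) := by
      intro n
      rw [← Finset.prod_mul_distrib, ← Finset.prod_mul_distrib, ← Finset.prod_div_distrib]
    have h2 : Tendsto (fun n : ℕ => ∏ k ∈ Finset.range n,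
        ((1 - Q * Q ^ k) * (1 - q ^ (α+1) * q ^ k))
          / ((1 - q * q ^ k) * (1 - Q ^ (α+1) * Q ^ k))) atTop
        (𝓝 (((∏' j : ℕ, (1 - Q * Q ^ j)) * (∏' j : ℕ, (1 - q ^ (α+1) * q ^ j)))
          / ((∏' j : ℕ, (1 - q * q ^ j)) * (∏' j : ℕ, (1 - Q ^ (α+1) * Q ^ j))))) := by
      have := ((mA.hasProd.tendsto_prod_nat.mul mD.hasProd.tendsto_prod_nat).div
        (mC.hasProd.tendsto_prod_nat.mul mB.hasProd.tendsto_prod_nat)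
        (mul_ne_zero hPCne hPBne))
      exact this.congr (fun n => (heq n).symm)
    have hLHSval : (∏' k : ℕ,
        ((1 - Q * Q ^ k) * (1 - q ^ (α+1) * q ^ k))
          / ((1 - q * q ^ k) * (1 - Q ^ (α+1) * Q ^ k)))
        = ((∏' j : ℕ, (1 - Q * Q ^ j)) * (∏' j : ℕ, (1 - q ^ (α+1) * q ^ j)))
          / ((∏' j : ℕ, (1 - q * q ^ j)) * (∏' j : ℕ, (1 - Q ^ (α+1) * Q ^ j))) :=
      tendsto_nhds_unique hMnew.hasProd.tendsto_prod_nat h2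
    rw [tprod_congr hterm, hLHSval]
    have hQpow : qNum q (p+1) = (1-Q)/(1-q) := by
      simp only [qNum, ← hQdef]
    rw [qGamma, qGamma, hQpow, show (1:ℝ) - (α+1) = -α by ring,
      Real.rpow_neg hQ1'.le, Real.rpow_neg hq1'.le, Real.div_rpow hQ1'.le hq1'.le]
    have hu : ((1-Q) ^ α) ≠ 0 := (Real.rpow_pos_of_pos hQ1' _).ne'
    have hv : ((1-q) ^ α) ≠ 0 := (Real.rpow_pos_of_pos hq1' _).ne'
    simp only [qPochInf]
    field_simp
end

section
/- For α > 0 and f continuous on [0,a] with a > 0, the limit as p → -1⁺ of the Katugampola-type integral ((p+1)^{1-α}/Γ(α)) ∫₀^a w^p f(w)(a^{p+1} - w^{p+1})^{α-1} dw equals the Hadamard fractional integral (1/Γ(α)) ∫₀^a (log(a/w))^{α-1} f(w) dw/w, provided the latter integral converges (e.g., f vanishing suitably near 0 or integrals taken from ε > 0). -/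
open scoped BigOperators

/-! With `ρ = p + 1` the normalising factor `ρ ^ (1 - α)` is absorbed into the difference quotient
`(a ^ ρ - w ^ ρ) / ρ`, which tends to `log (a / w)` as `ρ → 0⁺`. By the Cauchy mean value theorem
this quotient equals `ξ ^ ρ * log (a / w)` for some `ξ ∈ [w, a]`, and `ξ ^ ρ` stays in a compact
range, so for `ρ ∈ (0, 1]` the integrand is dominated by a multiple of
`log (a / w) ^ (α - 1) / w`, which is integrable because it is the derivative of
`-log (a / w) ^ α / α`. Dominated convergence concludes. -/

open Real MeasureTheory Set Filter Topology intervalIntegral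

lemma tendsto_rpow_sub_rpow_div_nhdsGT_zero {a w : ℝ} (ha : 0 < a) (hw : 0 < w) :
    Tendsto (fun s => (a ^ s - w ^ s) / s) (𝓝[>] 0) (𝓝 (log (a / w))) := by
  have hws : Tendsto (fun s : ℝ => w ^ s) (𝓝[>] 0) (𝓝 1) := by
    simpa using ((continuous_const_rpow hw.ne').tendsto 0).mono_left nhdsWithin_le_nhds
  have := hws.mul (tendsto_rpow_sub_one_log (div_pos ha hw))
  rw [one_mul] at this
  refine this.congr fun s => ?_
  rw [div_rpow ha.le hw.le]
  field_simp

lemma exists_rpow_sub_rpow_div_eq_mul_log {a w s : ℝ} (hw : 0 < w) (hwa : w ≤ a) (hs : s ≠ 0) :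
    ∃ ξ ∈ Icc w a, (a ^ s - w ^ s) / s = ξ ^ s * log (a / w) := by
  rcases hwa.eq_or_lt with rfl | hlt
  · exact ⟨w, left_mem_Icc.2 le_rfl, by simp⟩
  have hpos : ∀ x ∈ Icc w a, x ≠ 0 := fun x hx => (hw.trans_le hx.1).ne'
  obtain ⟨ξ, hξ, h⟩ := exists_ratio_hasDerivAt_eq_ratio_slope log (·⁻¹) hlt
    (continuousOn_log.mono fun x hx => hpos x hx)
    (fun x hx => hasDerivAt_log (hpos x (Ioo_subset_Icc_self hx)))
    (fun x => x ^ s) (fun x => s * x ^ (s - 1))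
    (continuousOn_id.rpow_const fun x hx => Or.inl (hpos x hx))
    (fun x hx => hasDerivAt_rpow_const (Or.inl (hpos x (Ioo_subset_Icc_self hx))))
  have hξ0 : ξ ≠ 0 := hpos ξ (Ioo_subset_Icc_self hξ)
  refine ⟨ξ, Ioo_subset_Icc_self hξ, ?_⟩
  rw [rpow_sub_one hξ0] at h
  rw [log_div (hw.trans hlt).ne' hw.ne']
  field_simp at h ⊢
  linarith

lemma exists_forall_rpow_le {ε t : ℝ} (hε : 0 < ε) {T : Set ℝ} (hT : IsCompact T) {g : ℝ → ℝ}
    (hg : ContinuousOn g T) : ∃ K, ∀ x ∈ Icc ε t, ∀ s ∈ T, x ^ g s ≤ K := by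
  obtain ⟨K, hK⟩ := (isCompact_Icc.prod hT).exists_bound_of_continuousOn
    (f := fun q : ℝ × ℝ => q.1 ^ g q.2)
    (continuousOn_fst.rpow (hg.comp continuousOn_snd fun q hq => hq.2)
      fun q hq => Or.inl (hε.trans_le hq.1.1).ne')
  exact ⟨K, fun x hx s hs => (le_abs_self _).trans (hK (x, s) ⟨hx, hs⟩)⟩

lemma intervalIntegrable_log_div_rpow_div {ε t α : ℝ} (hε : 0 < ε) (hεt : ε ≤ t) (hα : 0 < α) :
    IntervalIntegrable (fun τ => log (t / τ) ^ (α - 1) / τ) volume ε t := by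
  have hlog : ∀ τ ∈ Ioo ε t, 0 < log (t / τ) := fun τ hτ =>
    log_pos ((one_lt_div (hε.trans hτ.1)).2 hτ.2)
  refine intervalIntegrable_deriv_of_nonneg (g := fun τ => -(log (t / τ) ^ α / α)) ?_ ?_ ?_
  · rw [uIcc_of_le hεt]
    refine ((ContinuousOn.rpow_const ?_ fun _ _ => Or.inr hα.le).div_const α).neg
    refine (continuousOn_const.div continuousOn_id fun τ hτ => ?_).log fun τ hτ => ?_
    · exact (hε.trans_le hτ.1).ne'
    · exact (div_pos (hε.trans_le (hτ.1.trans hτ.2)) (hε.trans_le hτ.1)).ne'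
  · rw [min_eq_left hεt, max_eq_right hεt]
    intro τ hτ
    have hτ0 : τ ≠ 0 := (hε.trans hτ.1).ne'
    have ht0 : t ≠ 0 := (hε.trans (hτ.1.trans hτ.2)).ne'
    have := ((((hasDerivAt_inv hτ0).const_mul t).log (by simp [ht0, hτ0])).rpow_const
      (p := α) (Or.inl (hlog τ hτ).ne')).div_const α |>.neg
    simp only [← div_eq_mul_inv] at this
    refine this.congr_deriv ?_
    field_simp
  · rw [min_eq_left hεt, max_eq_right hεt]
    exact fun τ hτ => div_nonneg (rpow_nonneg (hlog τ hτ).le _) (hε.trans hτ.1).le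

/-- The kernel `ρ ^ (1 - α) τ ^ (ρ - 1) (t ^ ρ - τ ^ ρ) ^ (α - 1)` of the Katugampola fractional
integral of order `α`. -/
noncomputable def katugampolaKernel (α ρ t τ : ℝ) : ℝ :=
  τ ^ (ρ - 1) * ((t ^ ρ - τ ^ ρ) / ρ) ^ (α - 1)

lemma katugampolaKernel_nonneg {α ρ t τ : ℝ} (hρ : 0 < ρ) (hτ : 0 ≤ τ) (hτt : τ ≤ t) :
    0 ≤ katugampolaKernel α ρ t τ :=
  mul_nonneg (rpow_nonneg hτ _) (rpow_nonneg (div_nonneg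
    (sub_nonneg.2 (rpow_le_rpow hτ hτt hρ.le)) hρ.le) _)

lemma exists_katugampolaKernel_le (α : ℝ) {ε t : ℝ} (hε : 0 < ε) (hεt : ε ≤ t) :
    ∃ C, ∀ ρ ∈ Ioc (0 : ℝ) 1, ∀ τ ∈ Icc ε t,
      katugampolaKernel α ρ t τ ≤ C * (log (t / τ) ^ (α - 1) / τ) := by
  obtain ⟨K₁, hK₁⟩ := exists_forall_rpow_le (t := t) hε (isCompact_Icc (a := 0) (b := 1))
    continuousOn_id
  obtain ⟨K₂, hK₂⟩ := exists_forall_rpow_le (t := t) hε (isCompact_Icc (a := 0) (b := 1))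
    (continuousOn_id.mul_const (α - 1))
  have hK₁0 : 0 ≤ K₁ := (rpow_nonneg hε.le _).trans (hK₁ ε ⟨le_rfl, hεt⟩ 0 ⟨le_rfl, zero_le_one⟩)
  refine ⟨K₁ * K₂, fun ρ hρ τ hτ => ?_⟩
  have hτ0 : 0 < τ := hε.trans_le hτ.1
  obtain ⟨ξ, hξ, hH⟩ := exists_rpow_sub_rpow_div_eq_mul_log hτ0 hτ.2 hρ.1.ne'
  have hξ0 : 0 < ξ := hτ0.trans_le hξ.1
  have hL : 0 ≤ log (t / τ) := log_nonneg ((one_le_div hτ0).2 hτ.2)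
  have hξτ : ξ ∈ Icc ε t := ⟨hτ.1.trans hξ.1, hξ.2⟩
  calc katugampolaKernel α ρ t τ
      = τ ^ ρ * ξ ^ (ρ * (α - 1)) * (log (t / τ) ^ (α - 1) / τ) := by
        rw [katugampolaKernel, hH, mul_rpow (rpow_nonneg hξ0.le _) hL, ← rpow_mul hξ0.le,
          rpow_sub_one hτ0.ne']
        ring
    _ ≤ K₁ * K₂ * (log (t / τ) ^ (α - 1) / τ) := by
        have hρ' : ρ ∈ Icc (0 : ℝ) 1 := Ioc_subset_Icc_self hρ
        gcongr
        · exact hK₁ τ hτ ρ hρ'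
        · exact hK₂ ξ hξτ ρ hρ'

lemma tendsto_katugampolaKernel (α : ℝ) {t τ : ℝ} (hτ : 0 < τ) (hτt : τ < t) :
    Tendsto (fun ρ => katugampolaKernel α ρ t τ) (𝓝[>] 0) (𝓝 (log (t / τ) ^ (α - 1) / τ)) := by
  have hpow : Tendsto (fun ρ : ℝ => τ ^ (ρ - 1)) (𝓝[>] 0) (𝓝 (τ ^ (0 - 1 : ℝ))) :=
    (((continuous_const_rpow hτ.ne').comp (continuous_sub_right 1)).tendsto 0).mono_left
      nhdsWithin_le_nhds
  have hlog : log (t / τ) ≠ 0 := (log_pos ((one_lt_div hτ).2 hτt)).ne'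
  have hdiff := ((continuousAt_rpow_const _ (α - 1) (Or.inl hlog)).tendsto).comp
    (tendsto_rpow_sub_rpow_div_nhdsGT_zero (hτ.trans hτt) hτ)
  have := hpow.mul hdiff
  rwa [zero_sub, rpow_neg_one, inv_mul_eq_div] at this

lemma tendsto_integral_katugampolaKernel_mul {α ε t : ℝ} {f : ℝ → ℝ} (hα : 0 < α) (hε : 0 < ε)
    (hεt : ε ≤ t) (hf : ContinuousOn f (Icc ε t)) :
    Tendsto (fun ρ => ∫ τ in ε..t, katugampolaKernel α ρ t τ * f τ) (𝓝[>] 0)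
      (𝓝 (∫ τ in ε..t, log (t / τ) ^ (α - 1) * f τ / τ)) := by
  obtain ⟨C, hC⟩ := exists_katugampolaKernel_le α hε hεt
  obtain ⟨M, hM⟩ := isCompact_Icc.exists_bound_of_continuousOn hf
  have hker_meas : ∀ ρ, Measurable fun τ => katugampolaKernel α ρ t τ := fun ρ => by
    unfold katugampolaKernel; fun_prop
  have hf_meas : AEStronglyMeasurable f (volume.restrict (uIoc ε t)) :=
    (hf.aestronglyMeasurable measurableSet_Icc).mono_set
      (by rw [uIoc_of_le hεt]; exact Ioc_subset_Icc_self)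
  refine tendsto_integral_filter_of_dominated_convergence
    (fun τ => C * M * (log (t / τ) ^ (α - 1) / τ))
    (Eventually.of_forall fun ρ => (hker_meas ρ).aestronglyMeasurable.mul hf_meas) ?_
    ((intervalIntegrable_log_div_rpow_div hε hεt hα).const_mul (C * M)) ?_
  · filter_upwards [Ioc_mem_nhdsGT zero_lt_one] with ρ hρ
    refine Eventually.of_forall fun τ hτ => ?_
    rw [uIoc_of_le hεt] at hτ
    have hτ' : τ ∈ Icc ε t := Ioc_subset_Icc_self hτ
    rw [norm_mul, Real.norm_of_nonneg (katugampolaKernel_nonneg hρ.1 (hε.le.trans hτ'.1) hτ'.2)]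
    calc katugampolaKernel α ρ t τ * ‖f τ‖
        ≤ C * (log (t / τ) ^ (α - 1) / τ) * M :=
          mul_le_mul (hC ρ hρ τ hτ') (hM τ hτ') (norm_nonneg _)
            ((katugampolaKernel_nonneg hρ.1 (hε.le.trans hτ'.1) hτ'.2).trans (hC ρ hρ τ hτ'))
      _ = C * M * (log (t / τ) ^ (α - 1) / τ) := by ring
  · filter_upwards [volume.ae_ne t] with τ hτt hτ
    rw [uIoc_of_le hεt] at hτ
    rw [mul_div_right_comm]
    exact (tendsto_katugampolaKernel α (hε.trans hτ.1) (hτ.2.lt_of_ne hτt)).mul_const (f τ)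

lemma rpow_mul_integral_eq_integral_katugampolaKernel_mul {α ρ ε t : ℝ} (f : ℝ → ℝ) (hρ : 0 < ρ)
    (hε : 0 ≤ ε) (hεt : ε ≤ t) :
    ρ ^ (1 - α) * ∫ τ in ε..t, τ ^ (ρ - 1) * f τ * (t ^ ρ - τ ^ ρ) ^ (α - 1) =
      ∫ τ in ε..t, katugampolaKernel α ρ t τ * f τ := by
  rw [← intervalIntegral.integral_const_mul]
  refine integral_congr fun τ hτ => ?_
  rw [uIcc_of_le hεt] at hτ
  have hτt : τ ^ ρ ≤ t ^ ρ := rpow_le_rpow (hε.trans hτ.1) hτ.2 hρ.le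
  rw [katugampolaKernel, div_rpow (sub_nonneg.2 hτt) hρ.le, div_eq_mul_inv, ← rpow_neg hρ.le,
    neg_sub]
  ring

theorem katugampola_tendsto_hadamard (α a ε : ℝ) (f : ℝ → ℝ)
    (hα : 0 < α) (hε : 0 < ε) (hεa : ε < a) (hf : ContinuousOn f (Set.Icc ε a)) :
    Filter.Tendsto
      (fun p => ((p + 1) ^ (1 - α) / Real.Gamma α) *
        ∫ w in ε..a, w ^ p * f w * (a ^ (p + 1) - w ^ (p + 1)) ^ (α - 1))
      (nhdsWithin (-1) (Set.Ioi (-1)))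
      (nhds ((1 / Real.Gamma α) * ∫ w in ε..a, (Real.log (a / w)) ^ (α - 1) * f w / w)) := by
  have hshift : Tendsto (· + 1) (𝓝[>] (-1 : ℝ)) (𝓝[>] 0) := by
    refine tendsto_nhdsWithin_iff.2 ⟨?_, eventually_nhdsWithin_of_forall fun p (hp : -1 < p) =>
      show (0 : ℝ) < p + 1 by linarith⟩
    simpa using ((continuous_add_const (1 : ℝ)).tendsto (-1)).mono_left nhdsWithin_le_nhds
  have hlim := ((tendsto_integral_katugampolaKernel_mul hα hε hεa.le hf).comp hshift).const_mul
    (1 / Real.Gamma α)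
  refine hlim.congr' ?_
  filter_upwards [self_mem_nhdsWithin] with p (hp : -1 < p)
  rw [Function.comp_apply, ← rpow_mul_integral_eq_integral_katugampolaKernel_mul f
    (by linarith) hε.le hεa.le, add_sub_cancel_right]
  ring
end

section
/- (Semigroup property) For 0 < q < 1, p > -1, α, β > 0, x > 0, and f such that all iterated Jackson integrals converge absolutely, J^α_{p,q}(J^β_{p,q} f)(x) = J^{α+β}_{p,q} f(x). -/
open scoped BigOperators

/-- generalized q-fractional integral J^α_{p,q} (Rajković-type normalization). -/
noncomputable def Jfrac2 (q p α : ℝ) (f : ℝ → ℝ) (x : ℝ) : ℝ :=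
  ((1 - q) ^ (α - 1) / genPow (q ^ (p + 1)) 1 (q ^ (p + 1)) (α - 1)) *
    jackson q x (fun w => w ^ p * f w *
      genPow (q ^ (p + 1)) (x ^ (p + 1)) ((w * q) ^ (p + 1)) (α - 1))

/-!
With `Q = q^(p+1)`, the factorisation `(a;Q)_∞ = (a;Q)_n (aQ^n;Q)_∞` turns `J^γ_{p,q} g(x)` into
the weighted series `(1-q)^γ x^((p+1)γ) ∑ᵢ Qⁱ (Q^γ;Q)ᵢ/(Q;Q)ᵢ g(qⁱ x)`. Composing two of them
gives a double series whose `(i, j)` term involves `f` only through `f(q^(i+j) x)`; it converges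
absolutely because `f` is bounded, so it may be summed along antidiagonals, where the
q-Chu–Vandermonde identity `∑_{i+j=n} Bⁱ (A;Q)ᵢ (B;Q)ⱼ / ((Q;Q)ᵢ (Q;Q)ⱼ) = (AB;Q)ₙ / (Q;Q)ₙ`
with `A = Q^α`, `B = Q^β` produces the kernel of `J^(α+β)_{p,q}`.
-/

open Finset

section Finite

variable {K : Type*} [Field K]

noncomputable def qPoch (a Q : K) (n : ℕ) : K := ∏ m ∈ range n, (1 - a * Q ^ m)

noncomputable def qBinomCoeff (a Q : K) (n : ℕ) : K := qPoch a Q n / qPoch Q Q n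

@[simp] lemma qPoch_zero (a Q : K) : qPoch a Q 0 = 1 := prod_range_zero _

lemma qPoch_succ (a Q : K) (n : ℕ) : qPoch a Q (n + 1) = qPoch a Q n * (1 - a * Q ^ n) :=
  prod_range_succ _ n

lemma qPoch_self_ne_zero {Q : K} (hQ : ∀ m : ℕ, Q ^ (m + 1) ≠ 1) (n : ℕ) : qPoch Q Q n ≠ 0 :=
  prod_ne_zero_iff.2 fun m _ => by rw [← pow_succ']; exact sub_ne_zero.2 (hQ m).symm

@[simp] lemma qBinomCoeff_zero (a Q : K) : qBinomCoeff a Q 0 = 1 := by simp [qBinomCoeff]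

lemma qBinomCoeff_succ {Q : K} (hQ : ∀ m : ℕ, Q ^ (m + 1) ≠ 1) (a : K) (n : ℕ) :
    (1 - Q ^ (n + 1)) * qBinomCoeff a Q (n + 1) = (1 - a * Q ^ n) * qBinomCoeff a Q n := by
  have hn := qPoch_self_ne_zero hQ n
  have hn' := sub_ne_zero.2 (hQ n).symm
  rw [qBinomCoeff, qBinomCoeff, qPoch_succ, qPoch_succ, ← pow_succ']
  field_simp

/-- With `c_a = qBinomCoeff a Q`, the sums `S n = ∑_{i+j=n} Bⁱ c_A(i) c_B(j)` obey the recurrence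
`qBinomCoeff_succ` of `c_{AB}`; after shifting indices the boundary terms drop out because they
carry a factor `1 - Q⁰ = 0`. -/
lemma qVandermonde_recurrence {Q : K} (hQ : ∀ m : ℕ, Q ^ (m + 1) ≠ 1) (A B : K) (n : ℕ) :
    (1 - Q ^ (n + 1)) *
        ∑ p ∈ antidiagonal (n + 1), B ^ p.1 * qBinomCoeff A Q p.1 * qBinomCoeff B Q p.2 =
      (1 - A * B * Q ^ n) *
        ∑ p ∈ antidiagonal n, B ^ p.1 * qBinomCoeff A Q p.1 * qBinomCoeff B Q p.2 := by
  set u : ℕ → K := fun i => B ^ i * qBinomCoeff A Q i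
  set v : ℕ → K := qBinomCoeff B Q
  have split : (1 - Q ^ (n + 1)) * ∑ p ∈ antidiagonal (n + 1), u p.1 * v p.2 =
      ∑ p ∈ antidiagonal (n + 1), u p.1 * ((1 - Q ^ p.2) * v p.2) +
        ∑ p ∈ antidiagonal (n + 1), Q ^ p.2 * ((1 - Q ^ p.1) * u p.1) * v p.2 := by
    rw [mul_sum, ← sum_add_distrib]
    refine sum_congr rfl fun p hp => ?_
    rw [← mem_antidiagonal.1 hp, pow_add]
    ring
  change (1 - Q ^ (n + 1)) * ∑ p ∈ antidiagonal (n + 1), u p.1 * v p.2 =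
    (1 - A * B * Q ^ n) * ∑ p ∈ antidiagonal n, u p.1 * v p.2
  rw [split, Nat.sum_antidiagonal_succ', Nat.sum_antidiagonal_succ]
  simp only [pow_zero, sub_self, zero_mul, mul_zero, zero_add, mul_sum, ← sum_add_distrib]
  refine sum_congr rfl fun p hp => ?_
  have hu : (1 - Q ^ (p.1 + 1)) * u (p.1 + 1) = B * (1 - A * Q ^ p.1) * u p.1 := by
    simp only [u]; linear_combination B ^ (p.1 + 1) * qBinomCoeff_succ hQ A p.1
  rw [qBinomCoeff_succ hQ, hu, ← mem_antidiagonal.1 hp, pow_add]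
  ring

/-- The q-Chu–Vandermonde identity. -/
theorem sum_antidiagonal_qBinomCoeff {Q : K} (hQ : ∀ m : ℕ, Q ^ (m + 1) ≠ 1) (A B : K)
    (n : ℕ) :
    ∑ p ∈ antidiagonal n, B ^ p.1 * qBinomCoeff A Q p.1 * qBinomCoeff B Q p.2 =
      qBinomCoeff (A * B) Q n := by
  induction n with
  | zero => simp
  | succ n ih =>
    refine mul_left_cancel₀ (sub_ne_zero.2 (hQ n).symm) ?_
    rw [qVandermonde_recurrence hQ, ih, qBinomCoeff_succ hQ]

lemma sum_antidiagonal_pow_mul_qBinomCoeff {Q : K} (hQ : ∀ m : ℕ, Q ^ (m + 1) ≠ 1) (A B : K)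
    (n : ℕ) :
    ∑ p ∈ antidiagonal n, (Q * B) ^ p.1 * qBinomCoeff A Q p.1 * (Q ^ p.2 * qBinomCoeff B Q p.2) =
      Q ^ n * qBinomCoeff (A * B) Q n := by
  rw [← sum_antidiagonal_qBinomCoeff hQ, mul_sum]
  exact sum_congr rfl fun p hp => by rw [← mem_antidiagonal.1 hp]; ring

end Finite

section Infinite

open Filter Topology

variable {a Q : ℝ}

lemma summable_abs_mul_geometric (hQ : |Q| < 1) (a : ℝ) : Summable fun j : ℕ => |a * Q ^ j| := by
  simpa [abs_mul, abs_pow] using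
    (summable_geometric_of_lt_one (abs_nonneg Q) hQ).mul_left |a|

lemma multipliable_qPochInf (hQ : |Q| < 1) (a : ℝ) :
    Multipliable fun j : ℕ => 1 - a * Q ^ j := by
  simpa [sub_eq_add_neg] using
    Real.multipliable_one_add_of_summable ((summable_abs_mul_geometric hQ a).of_abs.neg)

lemma qPochInf_eq_qPoch_mul (hQ : |Q| < 1) (a : ℝ) (k : ℕ) :
    qPochInf a Q = qPoch a Q k * qPochInf (a * Q ^ k) Q := by
  have hshift : ∀ n : ℕ, 1 - a * Q ^ k * Q ^ n = 1 - a * Q ^ (n + k) := fun n => by ring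
  have hm : Multipliable fun n : ℕ => 1 - a * Q ^ (n + k) :=
    (multipliable_qPochInf hQ (a * Q ^ k)).congr hshift
  rw [qPochInf, ← Multipliable.prod_mul_tprod_nat_mul' (f := fun i => 1 - a * Q ^ i) hm, qPoch,
    qPochInf, tprod_congr hshift]

lemma tendsto_qPoch_qPochInf (hQ : |Q| < 1) (a : ℝ) :
    Tendsto (qPoch a Q) atTop (𝓝 (qPochInf a Q)) := by
  unfold qPoch qPochInf
  exact (multipliable_qPochInf hQ a).tendsto_prod_tprod_nat

lemma qPochInf_ne_zero (hQ : |Q| < 1) (ha : ∀ j : ℕ, a * Q ^ j ≠ 1) : qPochInf a Q ≠ 0 := by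
  have := tprod_one_add_ne_zero_of_summable (f := fun j : ℕ => -(a * Q ^ j))
    (fun j => by rw [← sub_eq_add_neg]; exact sub_ne_zero.2 (ha j).symm)
    (by simpa using summable_abs_mul_geometric hQ a)
  simpa [qPochInf, sub_eq_add_neg] using this

lemma one_sub_mul_pow_mem_Icc (ha0 : 0 ≤ a) (ha1 : a ≤ 1) (hQ0 : 0 ≤ Q) (hQ1 : Q ≤ 1) (j : ℕ) :
    1 - a * Q ^ j ∈ Set.Icc (0 : ℝ) 1 := by
  have h0 : 0 ≤ a * Q ^ j := mul_nonneg ha0 (pow_nonneg hQ0 j)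
  have h1 : a * Q ^ j ≤ 1 := mul_le_one₀ ha1 (pow_nonneg hQ0 j) (pow_le_one₀ hQ0 hQ1)
  constructor <;> linarith

lemma qPoch_mem_Icc (ha0 : 0 ≤ a) (ha1 : a ≤ 1) (hQ0 : 0 ≤ Q) (hQ1 : Q ≤ 1) (n : ℕ) :
    qPoch a Q n ∈ Set.Icc (0 : ℝ) 1 :=
  ⟨prod_nonneg fun j _ => (one_sub_mul_pow_mem_Icc ha0 ha1 hQ0 hQ1 j).1,
    prod_le_one (fun j _ => (one_sub_mul_pow_mem_Icc ha0 ha1 hQ0 hQ1 j).1)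
      fun j _ => (one_sub_mul_pow_mem_Icc ha0 ha1 hQ0 hQ1 j).2⟩

lemma qPoch_antitone (ha0 : 0 ≤ a) (ha1 : a ≤ 1) (hQ0 : 0 ≤ Q) (hQ1 : Q ≤ 1) :
    Antitone (qPoch a Q) := by
  refine antitone_nat_of_succ_le fun n => ?_
  rw [qPoch_succ]
  exact mul_le_of_le_one_right (qPoch_mem_Icc ha0 ha1 hQ0 hQ1 n).1
    (one_sub_mul_pow_mem_Icc ha0 ha1 hQ0 hQ1 n).2

lemma qPochInf_pos (ha0 : 0 ≤ a) (ha1 : a < 1) (hQ0 : 0 ≤ Q) (hQ1 : Q < 1) :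
    0 < qPochInf a Q := by
  have hQ : |Q| < 1 := by rwa [abs_of_nonneg hQ0]
  refine lt_of_le_of_ne (ge_of_tendsto' (tendsto_qPoch_qPochInf hQ a)
    fun n => (qPoch_mem_Icc ha0 ha1.le hQ0 hQ1.le n).1) (qPochInf_ne_zero hQ fun j => ?_).symm
  have : a * Q ^ j ≤ a := mul_le_of_le_one_right ha0 (pow_le_one₀ hQ0 hQ1.le)
  linarith

lemma abs_qBinomCoeff_le (ha0 : 0 ≤ a) (ha1 : a ≤ 1) (hQ0 : 0 ≤ Q) (hQ1 : Q < 1) (n : ℕ) :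
    |qBinomCoeff a Q n| ≤ (qPochInf Q Q)⁻¹ := by
  have hQ : |Q| < 1 := by rwa [abs_of_nonneg hQ0]
  have hinf := qPochInf_pos hQ0 hQ1 hQ0 hQ1
  have hle : qPochInf Q Q ≤ qPoch Q Q n :=
    (qPoch_antitone hQ0 hQ1.le hQ0 hQ1.le).le_of_tendsto (tendsto_qPoch_qPochInf hQ Q) n
  obtain ⟨hnum0, hnum1⟩ := qPoch_mem_Icc ha0 ha1 hQ0 hQ1.le n
  rw [qBinomCoeff, abs_div, abs_of_nonneg hnum0, abs_of_pos (hinf.trans_le hle), div_eq_mul_inv]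
  exact (mul_le_of_le_one_left (inv_pos.2 (hinf.trans_le hle)).le hnum1).trans
    (inv_anti₀ hinf hle)

lemma summable_abs_pow_mul_qBinomCoeff (ha0 : 0 ≤ a) (ha1 : a ≤ 1) (hQ0 : 0 ≤ Q) (hQ1 : Q < 1)
    {r : ℝ} (hr : |r| < 1) : Summable fun n : ℕ => |r ^ n * qBinomCoeff a Q n| := by
  refine ((summable_geometric_of_lt_one (abs_nonneg r) hr).mul_right
    (qPochInf Q Q)⁻¹).of_nonneg_of_le (fun n => abs_nonneg _) fun n => ?_
  rw [abs_mul, abs_pow]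
  exact mul_le_mul_of_nonneg_left (abs_qBinomCoeff_le ha0 ha1 hQ0 hQ1 n) (by positivity)

end Infinite

section Series

lemma genPow_div_genPow_one {Q : ℝ} (hQ0 : 0 < Q) (hQ1 : Q < 1) {γ : ℝ} (hγ : 0 < γ) {y : ℝ}
    (hy : y ≠ 0) (n : ℕ) :
    genPow Q y (Q ^ (n + 1) * y) (γ - 1) / genPow Q 1 Q (γ - 1) =
      y ^ (γ - 1) * qBinomCoeff (Q ^ γ) Q n := by
  have hQ : |Q| < 1 := by rwa [abs_of_pos hQ0]
  have hQγ : Q ^ γ < 1 := Real.rpow_lt_one hQ0.le hQ1 hγ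
  have hQγn : Q ^ γ * Q ^ n < 1 :=
    mul_lt_one_of_nonneg_of_lt_one_left (by positivity) hQγ (pow_le_one₀ hQ0.le hQ1.le)
  have hshift : Q ^ (γ - 1) * Q ^ (n + 1) = Q ^ γ * Q ^ n := by
    rw [pow_succ', ← mul_assoc, ← Real.rpow_add_one hQ0.ne', sub_add_cancel]
  have hn := qPochInf_pos (pow_nonneg hQ0.le (n + 1)) (pow_lt_one₀ hQ0.le hQ1 n.succ_ne_zero)
    hQ0.le hQ1
  have hγn := qPochInf_pos (by positivity) hQγn hQ0.le hQ1
  have hQn := qPoch_self_ne_zero (fun m => (pow_lt_one₀ hQ0.le hQ1 m.succ_ne_zero).ne) n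
  have hγ1 : Q ^ (γ - 1) * Q = Q ^ γ := by rw [← Real.rpow_add_one hQ0.ne', sub_add_cancel]
  simp only [genPow, mul_div_cancel_right₀ _ hy, div_one, Real.one_rpow, one_mul, hshift, hγ1]
  rw [qPochInf_eq_qPoch_mul hQ Q n, qPochInf_eq_qPoch_mul hQ (Q ^ γ) n, ← pow_succ', qBinomCoeff]
  field_simp

theorem Jfrac2_eq_tsum {q p γ x : ℝ} (hq0 : 0 < q) (hq1 : q < 1) (hp : -1 < p) (hγ : 0 < γ)
    (g : ℝ → ℝ) (hx : 0 < x) :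
    Jfrac2 q p γ g x = (1 - q) ^ γ * x ^ ((p + 1) * γ) *
      ∑' i : ℕ, (q ^ (p + 1)) ^ i * qBinomCoeff ((q ^ (p + 1)) ^ γ) (q ^ (p + 1)) i *
        g (q ^ i * x) := by
  set Q := q ^ (p + 1) with hQ
  have hQ0 : 0 < Q := Real.rpow_pos_of_pos hq0 _
  have hQ1 : Q < 1 := Real.rpow_lt_one hq0.le hq1 (by linarith)
  have hterm : ∀ i : ℕ,
      q ^ i * ((q ^ i * x) ^ p * g (q ^ i * x) *
          genPow Q (x ^ (p + 1)) ((q ^ i * x * q) ^ (p + 1)) (γ - 1)) / genPow Q 1 Q (γ - 1) =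
        x ^ p * (x ^ (p + 1)) ^ (γ - 1) * (Q ^ i * qBinomCoeff (Q ^ γ) Q i * g (q ^ i * x)) := by
    intro i
    have hnode : (q ^ i * x * q) ^ (p + 1) = Q ^ (i + 1) * x ^ (p + 1) := by
      rw [mul_right_comm, ← pow_succ, Real.mul_rpow (by positivity) hx.le,
        ← Real.rpow_pow_comm hq0.le]
    have hweight : q ^ i * (q ^ i * x) ^ p = Q ^ i * x ^ p := by
      rw [Real.mul_rpow (by positivity) hx.le, ← Real.rpow_pow_comm hq0.le, hQ,
        Real.rpow_add_one hq0.ne', mul_pow]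
      ring
    rw [hnode, mul_div_assoc, mul_div_assoc, genPow_div_genPow_one hQ0 hQ1 hγ (by positivity)]
    linear_combination g (q ^ i * x) * qBinomCoeff (Q ^ γ) Q i * (x ^ (p + 1)) ^ (γ - 1) * hweight
  have hpow : x * (x ^ p * (x ^ (p + 1)) ^ (γ - 1)) = x ^ ((p + 1) * γ) := by
    rw [← Real.rpow_mul hx.le, ← mul_assoc, mul_comm x, ← Real.rpow_add_one hx.ne',
      ← Real.rpow_add hx]
    ring_nf
  have hcoeff : (1 - q) ^ (γ - 1) * (1 - q) = (1 - q) ^ γ := by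
    rw [← Real.rpow_add_one (by linarith), sub_add_cancel]
  calc Jfrac2 q p γ g x
      = (1 - q) ^ (γ - 1) * (1 - q) * x * ∑' i : ℕ, q ^ i * ((q ^ i * x) ^ p * g (q ^ i * x) *
          genPow Q (x ^ (p + 1)) ((q ^ i * x * q) ^ (p + 1)) (γ - 1)) / genPow Q 1 Q (γ - 1) := by
        rw [Jfrac2, jackson, tsum_div_const]
        ring
    _ = _ := by
        rw [tsum_congr hterm, tsum_mul_left, hcoeff, ← hpow]
        ring

lemma Jfrac2_pow_mul_eq_tsum {q p γ x : ℝ} (hq0 : 0 < q) (hq1 : q < 1) (hp : -1 < p)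
    (hγ : 0 < γ) (g : ℝ → ℝ) (hx : 0 < x) (i : ℕ) :
    Jfrac2 q p γ g (q ^ i * x) = (1 - q) ^ γ * x ^ ((p + 1) * γ) *
      (((q ^ (p + 1)) ^ γ) ^ i * ∑' j : ℕ, (q ^ (p + 1)) ^ j *
        qBinomCoeff ((q ^ (p + 1)) ^ γ) (q ^ (p + 1)) j * g (q ^ (i + j) * x)) := by
  rw [Jfrac2_eq_tsum hq0 hq1 hp hγ g (by positivity), Real.mul_rpow (by positivity) hx.le,
    ← Real.rpow_pow_comm hq0.le, Real.rpow_mul hq0.le]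
  simp only [pow_add, mul_comm (q ^ i), mul_assoc]
  ring

end Series

section CauchyProduct

lemma tsum_prod_eq_tsum_sum_antidiagonal {f : ℕ × ℕ → ℝ} (hf : Summable f) :
    ∑' p, f p = ∑' n, ∑ p ∈ antidiagonal n, f p := by
  conv_rhs => congr; ext; rw [← Finset.sum_finset_coe, ← tsum_fintype (L := .unconditional _)]
  rw [← HasAntidiagonal.sigmaAntidiagonalEquivProd.tsum_eq f]
  exact (HasAntidiagonal.sigmaAntidiagonalEquivProd.summable_iff.2 hf).tsum_sigma'
    fun n => (hasSum_fintype _).summable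

theorem tsum_mul_tsum_mul_add {u v w : ℕ → ℝ} {C : ℝ} (hu : Summable fun i => |u i|)
    (hv : Summable fun j => |v j|) (hw : ∀ n, |w n| ≤ C) :
    ∑' i, u i * ∑' j, v j * w (i + j) =
      ∑' n, (∑ p ∈ antidiagonal n, u p.1 * v p.2) * w n := by
  set T : ℕ × ℕ → ℝ := fun p => u p.1 * (v p.2 * w (p.1 + p.2))
  have hT : Summable T := by
    refine Summable.of_norm_bounded
      ((hu.mul_of_nonneg hv (fun _ => abs_nonneg _) fun _ => abs_nonneg _).mul_right C) fun p => ?_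
    simp only [T, Real.norm_eq_abs, abs_mul, mul_assoc]
    exact mul_le_mul_of_nonneg_left (mul_le_mul_of_nonneg_left (hw _) (abs_nonneg _))
      (abs_nonneg _)
  calc ∑' i, u i * ∑' j, v j * w (i + j)
      = ∑' i, ∑' j, T (i, j) := tsum_congr fun i => tsum_mul_left.symm
    _ = ∑' p, T p := (hT.tsum_prod' hT.prod_factor).symm
    _ = ∑' n, ∑ p ∈ antidiagonal n, T p := tsum_prod_eq_tsum_sum_antidiagonal hT
    _ = _ := tsum_congr fun n => by
        rw [sum_mul]
        exact sum_congr rfl fun p hp => by rw [← mem_antidiagonal.1 hp]; ring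

end CauchyProduct

theorem Jfrac_semigroup (q p α β x : ℝ) (f : ℝ → ℝ)
    (hq0 : 0 < q) (hq1 : q < 1) (hp : -1 < p) (hα : 0 < α) (hβ : 0 < β) (hx : 0 < x)
    (hbd : ∃ C : ℝ, ∀ y ∈ Set.Ioc (0 : ℝ) x, |f y| ≤ C) :
    Jfrac2 q p α (fun y => Jfrac2 q p β f y) x = Jfrac2 q p (α + β) f x := by
  obtain ⟨C, hC⟩ := hbd
  set Q := q ^ (p + 1) with hQ
  have hQ0 : 0 < Q := Real.rpow_pos_of_pos hq0 _
  have hQ1 : Q < 1 := Real.rpow_lt_one hq0.le hq1 (by linarith)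
  have hu : Summable fun i : ℕ => |(Q * Q ^ β) ^ i * qBinomCoeff (Q ^ α) Q i| :=
    summable_abs_pow_mul_qBinomCoeff (by positivity) (Real.rpow_le_one hQ0.le hQ1.le hα.le)
      hQ0.le hQ1 <| by
        rw [abs_of_pos (by positivity)]
        exact mul_lt_one_of_nonneg_of_lt_one_left hQ0.le hQ1
          (Real.rpow_le_one hQ0.le hQ1.le hβ.le)
  have hv : Summable fun j : ℕ => |Q ^ j * qBinomCoeff (Q ^ β) Q j| :=
    summable_abs_pow_mul_qBinomCoeff (by positivity) (Real.rpow_le_one hQ0.le hQ1.le hβ.le)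
      hQ0.le hQ1 (by rwa [abs_of_pos hQ0])
  have hw : ∀ n : ℕ, |f (q ^ n * x)| ≤ C := fun n =>
    hC _ ⟨by positivity, mul_le_of_le_one_left hx.le (pow_le_one₀ hq0.le hq1.le)⟩
  calc Jfrac2 q p α (fun y => Jfrac2 q p β f y) x
      = (1 - q) ^ α * x ^ ((p + 1) * α) * ((1 - q) ^ β * x ^ ((p + 1) * β) *
          ∑' i, (Q * Q ^ β) ^ i * qBinomCoeff (Q ^ α) Q i *
            ∑' j, Q ^ j * qBinomCoeff (Q ^ β) Q j * f (q ^ (i + j) * x)) := by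
        rw [Jfrac2_eq_tsum hq0 hq1 hp hα _ hx, ← hQ,
          ← tsum_mul_left (a := (1 - q) ^ β * x ^ ((p + 1) * β))]
        simp only [Jfrac2_pow_mul_eq_tsum hq0 hq1 hp hβ f hx]
        exact congrArg _ (tsum_congr fun i => by ring)
    _ = (1 - q) ^ α * x ^ ((p + 1) * α) * ((1 - q) ^ β * x ^ ((p + 1) * β) *
          ∑' n, Q ^ n * qBinomCoeff (Q ^ (α + β)) Q n * f (q ^ n * x)) := by
        rw [tsum_mul_tsum_mul_add hu hv hw, Real.rpow_add hQ0]
        simp only [sum_antidiagonal_pow_mul_qBinomCoeff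
          (fun m => (pow_lt_one₀ hQ0.le hQ1 m.succ_ne_zero).ne)]
    _ = Jfrac2 q p (α + β) f x := by
        rw [Jfrac2_eq_tsum hq0 hq1 hp (add_pos hα hβ) f hx, ← hQ, Real.rpow_add (sub_pos.2 hq1),
          mul_add, Real.rpow_add hx]
        ring
end
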